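/- arXiv:2503.06285 — 2 statements merged into one kernel-verified Lean document; each statement's English description precedes it below -/
import Mathlib

section
/- Let A : H → H be L-Lipschitz and let (λ_k) be defined by: λ_0 > 0, and for k ≥ 1, λ_k = η₁α·‖w_k − w_{k−1}‖/‖A(w_k) − A(w_{k−1})‖ if ‖A(w_k) − A(w_{k−1})‖ > (η₀α/λ_{k−1})‖w_k − w_{k−1}‖, and λ_k = (1+γ_{k−1})λ_{k−1} otherwise, where 0 < η₁ < η₀ and γ_k > 0. Then λ_k ≥ min{η₁α/L, λ₀} > 0 for all k. -/
theorem stmt_9 {H : Type*} [NormedAddCommGroup H] [InnerProductSpace ℝ H]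
    (A : H → H) (L : ℝ) (hL : 0 < L)
    (hLip : ∀ x y : H, ‖A x - A y‖ ≤ L * ‖x - y‖)
    (α η₀ η₁ : ℝ) (hα : 0 < α) (hη₁ : 0 < η₁) (hη : η₁ < η₀)
    (γ : ℕ → ℝ) (hγ : ∀ k, 0 < γ k)
    (w : ℕ → H) (lam : ℕ → ℝ) (hlam0 : 0 < lam 0)
    (hne : ∀ k : ℕ, 1 ≤ k →
      ‖A (w k) - A (w (k - 1))‖ > η₀ * α / lam (k - 1) * ‖w k - w (k - 1)‖ →
      w k ≠ w (k - 1))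
    (hstep : ∀ k : ℕ, 1 ≤ k →
      (‖A (w k) - A (w (k - 1))‖ > η₀ * α / lam (k - 1) * ‖w k - w (k - 1)‖ →
        lam k = η₁ * α * ‖w k - w (k - 1)‖ / ‖A (w k) - A (w (k - 1))‖) ∧
      (¬ (‖A (w k) - A (w (k - 1))‖ > η₀ * α / lam (k - 1) * ‖w k - w (k - 1)‖) →
        lam k = (1 + γ (k - 1)) * lam (k - 1))) :
    (∀ k : ℕ, min (η₁ * α / L) (lam 0) ≤ lam k) ∧ 0 < min (η₁ * α / L) (lam 0) := by
  have hpos : 0 < min (η₁ * α / L) (lam 0) :=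
    lt_min (div_pos (mul_pos hη₁ hα) hL) hlam0
  refine ⟨?_, hpos⟩
  intro k
  induction k with
  | zero => exact min_le_right _ _
  | succ n ih =>
    have h1 : 1 ≤ n + 1 := Nat.le_add_left 1 n
    have hsub : n + 1 - 1 = n := rfl
    obtain ⟨hA, hB⟩ := hstep (n + 1) h1
    rw [hsub] at hA hB
    by_cases hc : ‖A (w (n+1)) - A (w n)‖ > η₀ * α / lam n * ‖w (n+1) - w n‖
    · have hwne : w (n+1) ≠ w n := by
        have := hne (n+1) h1
        rw [hsub] at this
        exact this hc
      have hwpos : 0 < ‖w (n+1) - w n‖ := by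
        rw [norm_pos_iff, sub_ne_zero]; exact hwne
      have hlamn : 0 < lam n := lt_of_lt_of_le hpos ih
      have hApos : 0 < ‖A (w (n+1)) - A (w n)‖ :=
        lt_of_le_of_lt (le_of_lt (mul_pos (div_pos (mul_pos (hη₁.trans hη) hα) hlamn) hwpos)) hc
      rw [hA hc]
      refine le_trans (min_le_left _ _) ?_
      rw [div_le_div_iff₀ hL hApos]
      calc η₁ * α * ‖A (w (n+1)) - A (w n)‖
          ≤ η₁ * α * (L * ‖w (n+1) - w n‖) := by
            exact mul_le_mul_of_nonneg_left (hLip _ _) (le_of_lt (mul_pos hη₁ hα))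
        _ = η₁ * α * ‖w (n+1) - w n‖ * L := by ring
    · rw [hB hc]
      have hlamn : 0 < lam n := lt_of_lt_of_le hpos ih
      nlinarith [hγ n, ih]
end

section
/- Let h be differentiable on a real inner product space, φ the golden ratio, and suppose ∇h(b̄_{k+1}) = ((φ−1)/φ)∇h(w_{k+1}) + (1/φ)∇h(b̄_k). Then B_h(w_{k+1}, b̄_{k+1}) ≤ (1/φ) B_h(w_{k+1}, b̄_k), provided h is convex (so that all Bregman distances are nonnegative). -/
/-!
Writing `∇h(b̄ₖ₊₁) = α ∇h(wₖ₊₁) + β ∇h(b̄ₖ)` with `α + β = 1`, a direct expansion gives the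
three-point identity
`B(w, b̄ₖ₊₁) + α B(b̄ₖ₊₁, w) + β B(b̄ₖ₊₁, b̄ₖ) = β B(w, b̄ₖ)`.
For the golden ratio both weights `α = (φ - 1)/φ` and `β = 1/φ` are nonnegative, and Bregman
distances of a differentiable convex function are nonnegative, so dropping the two middle terms
gives the claim.
-/

open scoped RealInnerProductSpace

theorem ConvexOn.fderiv_sub_le {E : Type*} [NormedAddCommGroup E] [NormedSpace ℝ E]
    {f : E → ℝ} {f' : E →L[ℝ] ℝ} {x : E} (hf : ConvexOn ℝ Set.univ f) (hx : HasFDerivAt f f' x)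
    (y : E) : f' (y - x) ≤ f y - f x := by
  let line : ℝ →ᵃ[ℝ] E := AffineMap.lineMap x y
  have hderiv : HasDerivAt (f ∘ line) (f' (y - x)) 0 := by
    refine HasFDerivAt.comp_hasDerivAt (0 : ℝ) ?_ AffineMap.hasDerivAt_lineMap
    simpa [line] using hx
  have hconv : ConvexOn ℝ Set.univ (f ∘ line) :=
    (hf.comp_affineMap line).subset (Set.subset_univ _) convex_univ
  simpa [slope_def_field, line] using
    hconv.le_slope_of_hasDerivAt (Set.mem_univ 0) (Set.mem_univ 1) one_pos hderiv

section Bregman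

variable {H : Type*} [NormedAddCommGroup H] [InnerProductSpace ℝ H]

def bregmanDist (h : H → ℝ) (G : H → H) (x y : H) : ℝ := h x - h y - ⟪G y, x - y⟫

theorem bregmanDist_nonneg [CompleteSpace H] {h : H → ℝ} {G : H → H}
    (hG : ∀ x, HasGradientAt h (G x) x) (hconv : ConvexOn ℝ Set.univ h) (x y : H) :
    0 ≤ bregmanDist h G x y := by
  have := hconv.fderiv_sub_le (hG y).hasFDerivAt x
  rw [InnerProductSpace.toDual_apply_apply] at this
  unfold bregmanDist
  linarith

theorem bregmanDist_three_point {h : H → ℝ} {G : H → H} {α β : ℝ} (hαβ : α + β = 1)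
    {x y z : H} (hz : G z = α • G x + β • G y) :
    bregmanDist h G x z + α * bregmanDist h G z x + β * bregmanDist h G z y =
      β * bregmanDist h G x y := by
  obtain rfl : β = 1 - α := by linarith
  simp only [bregmanDist, hz, inner_add_left, real_inner_smul_left, inner_sub_right]
  ring

theorem bregmanDist_le_of_gradient_eq_convexComb [CompleteSpace H] {h : H → ℝ} {G : H → H}
    (hG : ∀ x, HasGradientAt h (G x) x) (hconv : ConvexOn ℝ Set.univ h) {α β : ℝ}
    (hα : 0 ≤ α) (hβ : 0 ≤ β) (hαβ : α + β = 1) {x y z : H}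
    (hz : G z = α • G x + β • G y) :
    bregmanDist h G x z ≤ β * bregmanDist h G x y := by
  have hzx := mul_nonneg hα (bregmanDist_nonneg hG hconv z x)
  have hzy := mul_nonneg hβ (bregmanDist_nonneg hG hconv z y)
  linarith [bregmanDist_three_point (h := h) hαβ hz]

end Bregman

theorem stmt_15 {H : Type*} [NormedAddCommGroup H] [InnerProductSpace ℝ H] [CompleteSpace H]
    (h : H → ℝ) (G : H → H) (hdiff : ∀ x, HasGradientAt h (G x) x)
    (hconv : ConvexOn ℝ Set.univ h)
    (B : H → H → ℝ) (hB : ∀ a b, B a b = h a - h b - ⟪G b, a - b⟫)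
    (φ : ℝ) (hφ : φ = (Real.sqrt 5 + 1) / 2)
    (wk1 bk bk1 : H)
    (hgrad : G bk1 = ((φ - 1) / φ) • G wk1 + (1 / φ) • G bk) :
    B wk1 bk1 ≤ (1 / φ) * B wk1 bk := by
  have hφ_gt : 1 < φ := by
    rw [hφ, add_comm]
    exact Real.one_lt_goldenRatio
  have hφ_pos : 0 < φ := one_pos.trans hφ_gt
  obtain rfl : B = bregmanDist h G := funext₂ hB
  refine bregmanDist_le_of_gradient_eq_convexComb hdiff hconv ?_ ?_ ?_ hgrad
  · exact div_nonneg (sub_nonneg.mpr hφ_gt.le) hφ_pos.le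
  · positivity
  · field_simp
    ring
end
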